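/- Let φ : [0,1] → [0,1] be the tent map, φ(x) = 2x for x ∈ [0,1/2] and φ(x) = 2 − 2x for x ∈ (1/2,1], and let ℓ be Lebesgue measure on [0,1]. Define P : L¹([0,1]) → L¹([0,1]) by Pf(x) = (1/2) f(x/2) + (1/2) f(1 − x/2). Then P is the Frobenius–Perron operator of φ, i.e. ∫_A Pf dℓ = ∫_{φ⁻¹(A)} f dℓ for every Borel set A ⊆ [0,1] and every f ∈ L¹([0,1]); the constant function f* = 1_{[0,1]} satisfies Pf* = f*; and for every density f ∈ L¹([0,1]), lim_{n→∞} ‖Pⁿf − 1_{[0,1]}‖₁ = 0. -/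

import Mathlib

open MeasureTheory Filter

/-- A density: a nonnegative element of `L¹` of norm one. -/
def IsDensity {X : Type*} [MeasurableSpace X] (m : Measure X) (f : Lp ℝ 1 m) : Prop :=
  0 ≤ f ∧ ‖f‖ = 1

/-!
Let `Q = tentTransfer`, `Q g (x) = ½ g (x/2) + ½ g (1 - x/2)`, be the action of `P` on
representatives. The substitutions `y = x/2` and `y = 1 - x/2` map `[0, 1]` onto its two halves,
so `Q` preserves `∫₀¹`; since `φ (x/2) = φ (1 - x/2) = x` on `[0, 1]`, moreover
`1_A · Q g = Q ((1_A ∘ φ) · g)`. This gives the Frobenius–Perron identity, and together with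
`|Q g| ≤ Q |g|` it shows that `P` is an `L¹` contraction.

`Q` samples `g` at points half as far apart, so it doubles the scale of any modulus of
continuity: for uniformly continuous `g`, once `2ⁿ δ > 1` the iterate `Qⁿ g` oscillates by at
most `η` on `[0, 1]` and is therefore uniformly close to its mean `∫ g`. Continuous compactly
supported functions are dense in `L¹` and the contractions `Pⁿ` are equicontinuous, so
`Pⁿ f → (∫ f) · 1` for every `f ∈ L¹`.
-/

open Set Topology

theorem tendsto_pow_apply_of_dense {𝕜 E : Type*} [NontriviallyNormedField 𝕜]
    [NormedAddCommGroup E] [NormedSpace 𝕜 E] {T : E →L[𝕜] E} (hT : ∀ u, ‖T u‖ ≤ ‖u‖)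
    {π : E → E} (hπ : Continuous π) {s : Set E} (hs : Dense s)
    (h : ∀ u ∈ s, Tendsto (fun n : ℕ => (T ^ n) u) atTop (𝓝 (π u))) (u : E) :
    Tendsto (fun n : ℕ => (T ^ n) u) atTop (𝓝 (π u)) := by
  have hpow : ∀ n (v : E), ‖(T ^ n) v‖ ≤ 1 * ‖v‖ := by
    intro n
    induction n with
    | zero => simp
    | succ n ih => intro v; rw [pow_succ']; exact (hT _).trans (ih v)
  have hequi : Equicontinuous fun n : ℕ => ⇑(T ^ n) :=
    (LipschitzWith.uniformEquicontinuous _ 1 fun n => by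
      simpa using AddMonoidHomClass.lipschitz_of_bound (T ^ n) 1 (hpow n)).equicontinuous
  exact (hequi.isClosed_setOfPred_tendsto hπ).closure_subset_iff.2 h
    (hs.closure_eq ▸ mem_univ u)

theorem MeasureTheory.Lp.dense_setOf_hasCompactSupport {α E : Type*} [TopologicalSpace α]
    [NormalSpace α] [R1Space α] [WeaklyLocallyCompactSpace α] [MeasurableSpace α]
    [BorelSpace α] [NormedAddCommGroup E] [NormedSpace ℝ E] {μ : Measure α} [μ.Regular]
    {p : ENNReal} [Fact (1 ≤ p)] (hp : p ≠ ⊤) :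
    Dense {u : Lp E p μ | ∃ g : α → E, Continuous g ∧ HasCompactSupport g ∧ u =ᵐ[μ] g} := by
  refine Metric.dense_iff.2 fun u r hr => ?_
  obtain ⟨g, hg_supp, hg_close, hg_cont, hg_mem⟩ :=
    (Lp.memLp u).exists_hasCompactSupport_eLpNorm_sub_le hp
      (ENNReal.ofReal_pos.2 (half_pos hr)).ne'
  refine ⟨hg_mem.toLp g, ?_, g, hg_cont, hg_supp, hg_mem.coeFn_toLp⟩
  rw [Metric.mem_ball, dist_comm, Lp.dist_def,
    eLpNorm_congr_ae ((ae_eq_refl _).sub hg_mem.coeFn_toLp)]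
  exact (ENNReal.toReal_le_of_le_ofReal (half_pos hr).le hg_close).trans_lt (half_lt_self hr)

theorem abs_sub_integral_le_of_ae_abs_sub_le {Ω : Type*} [MeasurableSpace Ω] {μ : Measure Ω}
    [IsProbabilityMeasure μ] {g : Ω → ℝ} (hg : Integrable g μ) {a η : ℝ}
    (h : ∀ᵐ y ∂μ, |a - g y| ≤ η) : |a - ∫ y, g y ∂μ| ≤ η := by
  have hmean : a - ∫ y, g y ∂μ = ∫ y, (a - g y) ∂μ := by
    rw [integral_sub (integrable_const a) hg, integral_const, probReal_univ, one_smul]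
  simpa [hmean] using norm_integral_le_of_norm_le_const (μ := μ) (f := fun y => a - g y) h

theorem IsDensity.integral_eq_one {X : Type*} [MeasurableSpace X] {m : Measure X}
    {f : Lp ℝ 1 m} (hf : IsDensity m f) : ∫ x, f x ∂m = 1 := by
  rw [← hf.2, L1.norm_eq_integral_norm]
  refine integral_congr_ae ?_
  filter_upwards [(Lp.coeFn_nonneg f).2 hf.1] with x hx
  exact (Real.norm_of_nonneg hx).symm

noncomputable def tent (x : ℝ) : ℝ := if x ≤ 1/2 then 2 * x else 2 - 2 * x

noncomputable def tentTransfer (g : ℝ → ℝ) (x : ℝ) : ℝ :=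
  (1/2) * g (x / 2) + (1/2) * g (1 - x / 2)

theorem measurable_tent : Measurable tent :=
  Measurable.ite measurableSet_Iic (by fun_prop) (by fun_prop)

theorem tent_half {x : ℝ} (hx : x ≤ 1) : tent (x / 2) = x := by
  rw [tent, if_pos (by linarith)]; ring

theorem tent_one_sub_half {x : ℝ} (hx : x ≤ 1) : tent (1 - x / 2) = x := by
  unfold tent
  split_ifs <;> linarith

theorem indicator_tentTransfer {A : Set ℝ} {g : ℝ → ℝ} {x : ℝ} (hx : x ≤ 1) :
    A.indicator (tentTransfer g) x = tentTransfer ((tent ⁻¹' A).indicator g) x := by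
  by_cases hxA : x ∈ A <;>
    simp [tentTransfer, indicator, tent_half hx, tent_one_sub_half hx, hxA]

theorem abs_tentTransfer_le (g : ℝ → ℝ) (x : ℝ) :
    |tentTransfer g x| ≤ tentTransfer (fun y => |g y|) x := by
  simp only [tentTransfer]
  refine (abs_add_le _ _).trans_eq ?_
  rw [abs_mul, abs_mul, abs_of_pos (by norm_num : (0:ℝ) < 1/2)]

theorem abs_tentTransfer_sub_le {g : ℝ → ℝ} {δ η : ℝ}
    (hg : ∀ x y, |x - y| < δ → |g x - g y| ≤ η) {x y : ℝ} (hxy : |x - y| < 2 * δ) :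
    |tentTransfer g x - tentTransfer g y| ≤ η := by
  have h₁ := abs_le.1 (hg (x / 2) (y / 2) (by rw [← sub_div, abs_div]; norm_num; linarith))
  have h₂ := abs_le.1 (hg (1 - x / 2) (1 - y / 2)
    (by rw [sub_sub_sub_cancel_left, ← sub_div, abs_div, abs_sub_comm]; norm_num; linarith))
  simp only [tentTransfer]
  rw [abs_le]
  constructor <;> linarith [h₁.1, h₁.2, h₂.1, h₂.2]

theorem abs_iterate_tentTransfer_sub_le {g : ℝ → ℝ} {δ η : ℝ}
    (hg : ∀ x y, |x - y| < δ → |g x - g y| ≤ η) (n : ℕ) {x y : ℝ}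
    (hxy : |x - y| < 2 ^ n * δ) :
    |tentTransfer^[n] g x - tentTransfer^[n] g y| ≤ η := by
  induction n generalizing x y with
  | zero => simpa using hg x y (by simpa using hxy)
  | succ n ih =>
    rw [Function.iterate_succ_apply']
    exact abs_tentTransfer_sub_le (fun x y h => ih h) (by rw [pow_succ'] at hxy; linarith)

theorem half_mem_uIcc_zero_one : (1/2 : ℝ) ∈ uIcc 0 1 := by
  rw [uIcc_of_le zero_le_one]; norm_num

theorem IntervalIntegrable.comp_half {g : ℝ → ℝ} (hg : IntervalIntegrable g volume 0 1) :
    IntervalIntegrable (fun x => g (x / 2)) volume 0 1 := by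
  have hg' := hg.mono_set (uIcc_subset_uIcc left_mem_uIcc half_mem_uIcc_zero_one)
  simpa [div_eq_inv_mul] using hg'.comp_mul_left (c := 1/2)

theorem IntervalIntegrable.comp_one_sub_half {g : ℝ → ℝ}
    (hg : IntervalIntegrable g volume 0 1) :
    IntervalIntegrable (fun x => g (1 - x / 2)) volume 0 1 := by
  have hg' := hg.mono_set (uIcc_subset_uIcc half_mem_uIcc_zero_one right_mem_uIcc)
  have h := (hg'.comp_sub_left 1).symm.comp_mul_left (c := 1/2)
  norm_num at h
  simpa [div_eq_inv_mul] using h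

theorem intervalIntegrable_tentTransfer {g : ℝ → ℝ} (hg : IntervalIntegrable g volume 0 1) :
    IntervalIntegrable (tentTransfer g) volume 0 1 :=
  (hg.comp_half.const_mul _).add (hg.comp_one_sub_half.const_mul _)

theorem intervalIntegral_tentTransfer {g : ℝ → ℝ} (hg : IntervalIntegrable g volume 0 1) :
    ∫ x in 0..1, tentTransfer g x = ∫ x in 0..1, g x := by
  simp only [tentTransfer]
  rw [intervalIntegral.integral_add (hg.comp_half.const_mul _)
      (hg.comp_one_sub_half.const_mul _),
    intervalIntegral.integral_const_mul, intervalIntegral.integral_const_mul,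
    intervalIntegral.integral_comp_div _ two_ne_zero,
    intervalIntegral.integral_comp_sub_div _ two_ne_zero,
    ← intervalIntegral.integral_add_adjacent_intervals (b := 1/2)
      (hg.mono_set (uIcc_subset_uIcc left_mem_uIcc half_mem_uIcc_zero_one))
      (hg.mono_set (uIcc_subset_uIcc half_mem_uIcc_zero_one right_mem_uIcc))]
  norm_num
  ring

local notation "ℓ" => volume.restrict (Icc (0:ℝ) 1)

instance : IsProbabilityMeasure ℓ := ⟨by simp⟩

theorem integrable_unitInterval_iff {g : ℝ → ℝ} :
    Integrable g ℓ ↔ IntervalIntegrable g volume 0 1 :=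
  (intervalIntegrable_iff_integrableOn_Icc_of_le zero_le_one).symm

theorem integrable_tentTransfer {g : ℝ → ℝ} (hg : Integrable g ℓ) :
    Integrable (tentTransfer g) ℓ :=
  integrable_unitInterval_iff.2
    (intervalIntegrable_tentTransfer (integrable_unitInterval_iff.1 hg))

theorem integrable_iterate_tentTransfer {g : ℝ → ℝ} (hg : Integrable g ℓ) (n : ℕ) :
    Integrable (tentTransfer^[n] g) ℓ := by
  induction n with
  | zero => exact hg
  | succ n ih => rw [Function.iterate_succ_apply']; exact integrable_tentTransfer ih

theorem integral_tentTransfer {g : ℝ → ℝ} (hg : Integrable g ℓ) :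
    ∫ x, tentTransfer g x ∂ℓ = ∫ x, g x ∂ℓ := by
  simp only [integral_Icc_eq_integral_Ioc, ← intervalIntegral.integral_of_le zero_le_one]
  exact intervalIntegral_tentTransfer (integrable_unitInterval_iff.1 hg)

theorem integral_iterate_tentTransfer {g : ℝ → ℝ} (hg : Integrable g ℓ) (n : ℕ) :
    ∫ x, tentTransfer^[n] g x ∂ℓ = ∫ x, g x ∂ℓ := by
  induction n with
  | zero => rfl
  | succ n ih =>
    rw [Function.iterate_succ_apply',
      integral_tentTransfer (integrable_iterate_tentTransfer hg n), ih]

theorem setIntegral_tentTransfer {g : ℝ → ℝ} (hg : Integrable g ℓ) {A : Set ℝ}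
    (hA : MeasurableSet A) :
    ∫ x in A, tentTransfer g x ∂ℓ = ∫ x in tent ⁻¹' A, g x ∂ℓ := by
  rw [← integral_indicator hA, ← integral_indicator (measurable_tent hA),
    ← integral_tentTransfer (hg.indicator (measurable_tent hA))]
  refine integral_congr_ae ?_
  filter_upwards [ae_restrict_mem measurableSet_Icc] with x hx
  exact indicator_tentTransfer hx.2

theorem quasiMeasurePreserving_div_two :
    Measure.QuasiMeasurePreserving (fun x : ℝ => x / 2) := by
  convert Measure.quasiMeasurePreserving_smul (volume : Measure ℝ)
    (by norm_num : (1/2 : ℝ) ≠ 0) using 1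
  ext x; simp only [smul_eq_mul]; ring

theorem ae_comp_half {p : ℝ → Prop} (h : ∀ᵐ x ∂ℓ, p x) : ∀ᵐ x ∂ℓ, p (x / 2) :=
  (quasiMeasurePreserving_div_two.restrict (s := Icc 0 1) (t := Icc 0 1)
    fun _ hx => ⟨by linarith [hx.1], by linarith [hx.2]⟩).ae h

theorem ae_comp_one_sub_half {p : ℝ → Prop} (h : ∀ᵐ x ∂ℓ, p x) :
    ∀ᵐ x ∂ℓ, p (1 - x / 2) :=
  (((Measure.measurePreserving_sub_left volume (1:ℝ)).quasiMeasurePreserving.comp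
    quasiMeasurePreserving_div_two).restrict (s := Icc 0 1) (t := Icc 0 1)
    fun x hx => show 1 - x / 2 ∈ Icc 0 1 from ⟨by linarith [hx.2], by linarith [hx.1]⟩).ae h

theorem tentTransfer_congr_ae {g h : ℝ → ℝ} (hgh : g =ᵐ[ℓ] h) :
    tentTransfer g =ᵐ[ℓ] tentTransfer h := by
  filter_upwards [ae_comp_half hgh, ae_comp_one_sub_half hgh] with x h₁ h₂
  simp only [tentTransfer, h₁, h₂]

section FrobeniusPerron

variable {P : Lp ℝ 1 ℓ →L[ℝ] Lp ℝ 1 ℓ} (hP : ∀ f : Lp ℝ 1 ℓ, P f =ᵐ[ℓ] tentTransfer f)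
include hP

theorem setIntegral_apply_eq_setIntegral_preimage_tent (f : Lp ℝ 1 ℓ) {A : Set ℝ}
    (hA : MeasurableSet A) :
    ∫ x in A, P f x ∂ℓ = ∫ x in tent ⁻¹' A, f x ∂ℓ := by
  rw [setIntegral_congr_ae hA ((hP f).mono fun x hx _ => hx),
    setIntegral_tentTransfer (L1.integrable_coeFn f) hA]

theorem norm_apply_le (u : Lp ℝ 1 ℓ) : ‖P u‖ ≤ ‖u‖ := by
  have hu := L1.integrable_coeFn u
  rw [L1.norm_eq_integral_norm, L1.norm_eq_integral_norm, ← integral_tentTransfer hu.norm]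
  refine integral_mono_ae (L1.integrable_coeFn (P u)).norm (integrable_tentTransfer hu.norm) ?_
  filter_upwards [hP u] with x hx
  simpa only [Real.norm_eq_abs, hx] using abs_tentTransfer_le _ x

theorem pow_apply_ae_eq_iterate {u : Lp ℝ 1 ℓ} {g : ℝ → ℝ} (hug : u =ᵐ[ℓ] g) (n : ℕ) :
    (P ^ n) u =ᵐ[ℓ] tentTransfer^[n] g := by
  induction n with
  | zero => exact hug
  | succ n ih =>
    rw [pow_succ', Function.iterate_succ_apply']
    exact (hP _).trans (tentTransfer_congr_ae ih)

theorem apply_eq_self_of_ae_eq_one {fstar : Lp ℝ 1 ℓ} (hfstar : fstar =ᵐ[ℓ] fun _ => (1:ℝ)) :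
    P fstar = fstar := by
  refine Lp.ext ((pow_apply_ae_eq_iterate hP hfstar 1).trans ?_ |>.trans hfstar.symm)
  filter_upwards with x
  norm_num [tentTransfer]

theorem norm_pow_apply_sub_integral_smul_le {fstar : Lp ℝ 1 ℓ}
    (hfstar : fstar =ᵐ[ℓ] fun _ => (1:ℝ)) {u : Lp ℝ 1 ℓ} {g : ℝ → ℝ} (hg : Integrable g ℓ)
    (hug : u =ᵐ[ℓ] g) {δ η : ℝ} (hη : 0 ≤ η) (hgδ : ∀ x y, |x - y| < δ → |g x - g y| ≤ η)
    {n : ℕ} (hn : 1 < 2 ^ n * δ) :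
    ‖(P ^ n) u - (∫ x, g x ∂ℓ) • fstar‖ ≤ η := by
  have hmem : ∀ᵐ x ∂ℓ, x ∈ Icc (0:ℝ) 1 := ae_restrict_mem measurableSet_Icc
  refine (Lp.norm_le_of_ae_bound hη ?_).trans_eq (by simp [measureUnivNNReal])
  filter_upwards [Lp.coeFn_sub ((P ^ n) u) ((∫ x, g x ∂ℓ) • fstar),
    Lp.coeFn_smul (∫ x, g x ∂ℓ) fstar, pow_apply_ae_eq_iterate hP hug n, hfstar, hmem]
    with x hsub hsmul hPn hone hx
  rw [hsub, Pi.sub_apply, hsmul, Pi.smul_apply, hPn, hone, smul_eq_mul, mul_one,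
    Real.norm_eq_abs, ← integral_iterate_tentTransfer hg n]
  refine abs_sub_integral_le_of_ae_abs_sub_le (integrable_iterate_tentTransfer hg n) ?_
  filter_upwards [hmem] with y hy
  refine abs_iterate_tentTransfer_sub_le hgδ n (lt_of_le_of_lt ?_ hn)
  rw [abs_le]
  constructor <;> linarith [hx.1, hx.2, hy.1, hy.2]

theorem tendsto_pow_apply_of_uniformContinuous {fstar : Lp ℝ 1 ℓ}
    (hfstar : fstar =ᵐ[ℓ] fun _ => (1:ℝ)) {u : Lp ℝ 1 ℓ} {g : ℝ → ℝ} (hg : UniformContinuous g)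
    (hug : u =ᵐ[ℓ] g) :
    Tendsto (fun n : ℕ => (P ^ n) u) atTop (𝓝 ((∫ x, u x ∂ℓ) • fstar)) := by
  rw [integral_congr_ae hug]
  refine Metric.tendsto_atTop.2 fun ε hε => ?_
  obtain ⟨δ, hδ, hgδ⟩ := Metric.uniformContinuous_iff.1 hg (ε / 2) (half_pos hε)
  obtain ⟨N, hN⟩ := pow_unbounded_of_one_lt δ⁻¹ one_lt_two
  refine ⟨N, fun n hn => ?_⟩
  rw [dist_eq_norm]
  refine (norm_pow_apply_sub_integral_smul_le hP hfstar hg.continuous.integrableOn_Icc hug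
    (half_pos hε).le (fun x y h => (hgδ h).le) ?_).trans_lt (half_lt_self hε)
  calc 1 < 2 ^ N * δ := by rwa [inv_lt_iff_one_lt_mul₀ hδ] at hN
    _ ≤ 2 ^ n * δ := by gcongr; norm_num

end FrobeniusPerron

/-- **Exactness of the tent map via its Frobenius–Perron operator.**
Let `φ` be the tent map on `[0,1]`, `ℓ` Lebesgue measure on `[0,1]`, and let `P` be the
operator `Pf(x) = (1/2)f(x/2) + (1/2)f(1 − x/2)` on `L¹([0,1])`.  Then `P` is the
Frobenius–Perron operator of `φ`, i.e. `∫_A Pf dℓ = ∫_{φ⁻¹(A)} f dℓ` for every Borel `A`;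
the constant density `f* = 1_{[0,1]}` is invariant, `Pf* = f*`; and `‖Pⁿf − f*‖₁ → 0` for
every density `f`. -/
theorem tent_map_frobenius_perron_asymptotic_stability
    (μ : Measure ℝ) (hμ : μ = volume.restrict (Set.Icc (0:ℝ) 1))
    (φ : ℝ → ℝ) (hφ : ∀ x : ℝ, φ x = if x ≤ 1/2 then 2 * x else 2 - 2 * x)
    (P : Lp ℝ 1 μ →L[ℝ] Lp ℝ 1 μ)
    (hP : ∀ f : Lp ℝ 1 μ, ∀ᵐ x ∂μ,
      (P f : ℝ → ℝ) x = (1/2) * (f : ℝ → ℝ) (x / 2) + (1/2) * (f : ℝ → ℝ) (1 - x / 2))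
    (fstar : Lp ℝ 1 μ) (hfstar : (fstar : ℝ → ℝ) =ᵐ[μ] fun _ => (1:ℝ)) :
    (∀ f : Lp ℝ 1 μ, ∀ A : Set ℝ, MeasurableSet A →
      ∫ x in A, (P f : ℝ → ℝ) x ∂μ = ∫ x in φ ⁻¹' A, (f : ℝ → ℝ) x ∂μ) ∧
    P fstar = fstar ∧
    (∀ f : Lp ℝ 1 μ, IsDensity μ f →
      Tendsto (fun n : ℕ => ‖(P ^ n) f - fstar‖) atTop (nhds 0)) := by
  subst hμ
  obtain rfl : φ = tent := funext hφ
  replace hP : ∀ f : Lp ℝ 1 ℓ, P f =ᵐ[ℓ] tentTransfer f := hP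
  refine ⟨fun f A hA => setIntegral_apply_eq_setIntegral_preimage_tent hP f hA,
    apply_eq_self_of_ae_eq_one hP hfstar, fun f hf => ?_⟩
  have hlim := tendsto_pow_apply_of_dense (norm_apply_le hP)
    (π := fun u => (∫ x, u x ∂ℓ) • fstar) (continuous_integral.smul continuous_const)
    (Lp.dense_setOf_hasCompactSupport ENNReal.one_ne_top)
    (fun u ⟨g, hg_cont, hg_supp, hug⟩ => tendsto_pow_apply_of_uniformContinuous hP hfstar
      (hg_supp.uniformContinuous_of_continuous hg_cont) hug) f
  rw [hf.integral_eq_one, one_smul] at hlim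
  exact tendsto_iff_norm_sub_tendsto_zero.1 hlim
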